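/- Let G be a finite simple graph and e an edge of G. Then γ*_{rk}(G) − 1 ≤ γ*_{rk}(G − e) ≤ γ*_{rk}(G) + k, where G − e denotes the graph obtained from G by deleting the edge e. -/

import Mathlib

open SimpleGraph Finset

/-- A `k`-rainbow dominating function on a graph `H`. -/
def IsRDF {W : Type*} (H : SimpleGraph W) (k : ℕ) (f : W → Finset (Fin k)) : Prop :=
  ∀ w, f w = ∅ → ∀ c : Fin k, ∃ u, H.Adj w u ∧ c ∈ f u

/-- The weight of a rainbow dominating function. -/
noncomputable def rdfWeight {W : Type*} [Fintype W] {k : ℕ} (f : W → Finset (Fin k)) : ℕ :=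
  ∑ w, (f w).card

/-- The `k`-rainbow domination number of a graph. -/
noncomputable def rdn {W : Type*} [Fintype W] (H : SimpleGraph W) (k : ℕ) : ℕ :=
  sInf {n | ∃ f : W → Finset (Fin k), IsRDF H k f ∧ rdfWeight f = n}

/-- The middle graph of `G`, on vertex set `V(G) ⊕ E(G)`. -/
def middleGraph {V : Type*} (G : SimpleGraph V) : SimpleGraph (V ⊕ G.edgeSet) where
  Adj x y :=
    match x, y with
    | Sum.inl _, Sum.inl _ => False
    | Sum.inl v, Sum.inr e => v ∈ (e : Sym2 V)
    | Sum.inr e, Sum.inl v => v ∈ (e : Sym2 V)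
    | Sum.inr e, Sum.inr f => e ≠ f ∧ ∃ v, v ∈ (e : Sym2 V) ∧ v ∈ (f : Sym2 V)
  symm := by
    constructor
    rintro (v | e) (w | f) h
    · exact h.elim
    · exact h
    · exact h
    · exact ⟨Ne.symm h.1, h.2.imp fun v hv => ⟨hv.2, hv.1⟩⟩
  loopless := by
    constructor
    rintro (v | e) h
    · exact h.elim
    · exact h.1 rfl

/-- The middle `k`-rainbow domination number `γ*_{rk}(G)`. -/
noncomputable def mrdn {V : Type*} [Fintype V] (G : SimpleGraph V) (k : ℕ) : ℕ :=
  letI := Classical.decEq V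
  letI : DecidableRel G.Adj := fun _ _ => Classical.dec _
  rdn (middleGraph G) k

/-- The `k`-rainbow domatic number: the maximum size of a family of `k`-rainbow
dominating functions with `∑ i |f i v| ≤ k` for each vertex `v`. -/
noncomputable def rdomatic {W : Type*} (H : SimpleGraph W) (k : ℕ) : ℕ :=
  sSup {d | ∃ F : Fin d → W → Finset (Fin k), Function.Injective F ∧
    (∀ i, IsRDF H k (F i)) ∧ ∀ w, (∑ i, (F i w).card) ≤ k}

/-- The matching number `α'(G)`. -/
noncomputable def matchingNumber {V : Type*} [Fintype V] (G : SimpleGraph V) : ℕ :=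
  sSup {n | ∃ M : Finset (Sym2 V), ↑M ⊆ G.edgeSet ∧
    (∀ e ∈ M, ∀ f ∈ M, e ≠ f → ∀ v : V, ¬(v ∈ e ∧ v ∈ f)) ∧ M.card = n}


/-! `M(G − e)` is `M(G)` with the vertex `e` removed. Extending a rainbow dominating function of
`M(G − e)` by a single colour at `e` gives one of `M(G)`. Conversely, writing `e = uv`, every
neighbour of `e` in `M(G)` is `u`, `v`, or adjacent to one of them; so from a rainbow dominating
function of `M(G)` one gets one of `M(G − e)` by giving `u` all `k` colours and moving the colours
of `e` to `v`. -/

section RainbowDomination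

variable {W W' : Type*} [Fintype W] {H : SimpleGraph W} {k : ℕ}

lemma rdn_le_rdfWeight {f : W → Finset (Fin k)} (hf : IsRDF H k f) : rdn H k ≤ rdfWeight f :=
  Nat.sInf_le ⟨f, hf, rfl⟩

lemma exists_isRDF_rdfWeight_eq_rdn (H : SimpleGraph W) (k : ℕ) :
    ∃ f : W → Finset (Fin k), IsRDF H k f ∧ rdfWeight f = rdn H k :=
  Nat.sInf_mem (s := {n | ∃ f : W → Finset (Fin k), IsRDF H k f ∧ rdfWeight f = n})
    ⟨_, fun _ => univ, fun _ hw c => absurd (hw ▸ mem_univ c) (notMem_empty c), rfl⟩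

lemma rdn_zero (H : SimpleGraph W) : rdn H 0 = 0 :=
  Nat.eq_zero_of_le_zero <|
    (rdn_le_rdfWeight (f := fun _ => ∅) fun _ _ c => c.elim0).trans_eq (by simp [rdfWeight])

lemma rdfWeight_eq_card_add_rdfWeight_comp [Fintype W'] {φ : W' → W}
    (hφ : Function.Injective φ) {w₀ : W} (hrange : Set.range φ = {w₀}ᶜ)
    (F : W → Finset (Fin k)) :
    rdfWeight F = #(F w₀) + rdfWeight (F ∘ φ) := by
  classical
  have himage : univ.image φ = {w₀}ᶜ := by
    apply coe_injective
    simpa using hrange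
  rw [rdfWeight, rdfWeight, Fintype.sum_eq_add_sum_compl w₀, ← himage,
    sum_image fun x _ y _ h => hφ h]
  rfl

theorem rdn_le_add_one_of_range_eq_compl_singleton [Fintype W'] {H' : SimpleGraph W'}
    (φ : H' →g H) (hφ : Function.Injective φ) {w₀ : W} (hrange : Set.range φ = {w₀}ᶜ) :
    rdn H k ≤ rdn H' k + 1 := by
  obtain _ | k := k
  · simp [rdn_zero]
  obtain ⟨f, hf, hwf⟩ := exists_isRDF_rdfWeight_eq_rdn H' (k + 1)
  set F := Function.extend φ f fun _ => {0}
  have hFφ : ∀ x, F (φ x) = f x := hφ.extend_apply _ _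
  have hF₀ : F w₀ = {0} := Function.extend_apply' _ _ _ (by simp [← Set.mem_range, hrange])
  have hF : IsRDF H (k + 1) F := by
    intro w hw c
    obtain ⟨x, rfl⟩ : w ∈ Set.range φ := by
      rw [hrange]
      rintro rfl
      simp [hF₀] at hw
    rw [hFφ] at hw
    obtain ⟨y, hxy, hc⟩ := hf x hw c
    exact ⟨φ y, φ.map_adj hxy, (hFφ y).symm ▸ hc⟩
  calc rdn H (k + 1) ≤ rdfWeight F := rdn_le_rdfWeight hF
    _ = rdfWeight f + 1 := by
      rw [rdfWeight_eq_card_add_rdfWeight_comp hφ hrange, hF₀, card_singleton, add_comm]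
      congr 2
      exact funext hFφ
    _ = rdn H' (k + 1) + 1 := by rw [hwf]

theorem rdn_le_add_of_range_eq_compl_singleton [Fintype W'] {H' : SimpleGraph W'}
    (φ : H' ↪g H) {w₀ : W} (hrange : Set.range φ = {w₀}ᶜ) (a b : W')
    (hcover : ∀ w, H.Adj w₀ w → w = φ a ∨ w = φ b ∨ H.Adj w (φ a) ∨ H.Adj w (φ b)) :
    rdn H' k ≤ rdn H k + k := by
  classical
  obtain ⟨g, hg, hwg⟩ := exists_isRDF_rdfWeight_eq_rdn H k
  let f : W' → Finset (Fin k) := fun x =>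
    if x = a then univ else if x = b then g (φ b) ∪ g w₀ else g (φ x)
  have hfa : f a = univ := if_pos rfl
  have hfb : b ≠ a → f b = g (φ b) ∪ g w₀ := fun hba => (if_neg hba).trans (if_pos rfl)
  have hfx : ∀ x, x ≠ a → x ≠ b → f x = g (φ x) := fun x hxa hxb =>
    (if_neg hxa).trans (if_neg hxb)
  have hgf : ∀ x, g (φ x) ⊆ f x := by
    intro x
    by_cases hxa : x = a
    · simp [hxa, hfa]
    by_cases hxb : x = b
    · subst hxb
      simp [hfb hxa]
    · simp [hfx x hxa hxb]
  have hgf₀ : g w₀ ⊆ f b := by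
    by_cases hba : b = a
    · simp [hba, hfa]
    · simp [hfb hba]
  have hf : IsRDF H' k f := by
    intro x hx c
    have hxa : x ≠ a := by
      rintro rfl
      rw [hfa] at hx
      exact notMem_empty c (hx ▸ mem_univ c)
    obtain ⟨u, hxu, hc⟩ := hg (φ x) (subset_empty.1 (hx ▸ hgf x)) c
    by_cases hu : u ∈ Set.range φ
    · obtain ⟨y, rfl⟩ := hu
      exact ⟨y, φ.map_adj_iff.1 hxu, hgf y hc⟩
    have hu₀ : u = w₀ := by simpa [hrange] using hu
    subst hu₀
    by_cases hxb : x = b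
    · subst hxb
      rw [hfb hxa, union_eq_empty] at hx
      simp [hx.2] at hc
    rcases hcover (φ x) hxu.symm with h | h | h | h
    · exact absurd (φ.injective h) hxa
    · exact absurd (φ.injective h) hxb
    · exact ⟨a, φ.map_adj_iff.1 h, hfa ▸ mem_univ c⟩
    · exact ⟨b, φ.map_adj_iff.1 h, hgf₀ hc⟩
  have hcard : ∀ x,
      #(f x) ≤ #(g (φ x)) + (if x = a then k else 0) + (if x = b then #(g w₀) else 0) := by
    intro x
    by_cases hxa : x = a
    · subst hxa
      simp only [hfa, card_univ, Fintype.card_fin, if_pos]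
      omega
    by_cases hxb : x = b
    · subst hxb
      simpa [hfb hxa, hxa] using card_union_le _ _
    · simp [hfx x hxa hxb, hxa, hxb]
  calc rdn H' k ≤ rdfWeight f := rdn_le_rdfWeight hf
    _ ≤ rdfWeight (g ∘ φ) + k + #(g w₀) := by
      refine (sum_le_sum fun x _ => hcard x).trans_eq ?_
      rw [sum_add_distrib, sum_add_distrib, sum_ite_eq', sum_ite_eq']
      simp [rdfWeight]
    _ = rdn H k + k := by
      rw [← hwg, rdfWeight_eq_card_add_rdfWeight_comp φ.injective hrange g]
      ring

end RainbowDomination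

section MiddleGraph

variable {V : Type*} {G : SimpleGraph V}

def middleGraphEmbeddingOfLE {G' : SimpleGraph V} (h : G' ≤ G) :
    middleGraph G' ↪g middleGraph G where
  toFun := Sum.map id (Set.inclusion (edgeSet_mono h))
  inj' := Sum.map_injective.2 ⟨Function.injective_id, Set.inclusion_injective _⟩
  map_rel_iff' := by
    rintro (v | e) (w | f) <;> simp [middleGraph, Subtype.ext_iff]

lemma range_middleGraphEmbeddingOfLE_deleteEdges {e : Sym2 V} (he : e ∈ G.edgeSet) :
    Set.range (middleGraphEmbeddingOfLE (G.deleteEdges_le {e})) = {Sum.inr ⟨e, he⟩}ᶜ := by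
  ext (v | ⟨f, hf⟩)
  · simp [middleGraphEmbeddingOfLE]
  · simp [middleGraphEmbeddingOfLE, hf]

lemma middleGraph_adj_inr_mk_imp {u v : V} (he : s(u, v) ∈ G.edgeSet) (w : V ⊕ G.edgeSet)
    (hw : (middleGraph G).Adj (Sum.inr ⟨s(u, v), he⟩) w) :
    w = Sum.inl u ∨ w = Sum.inl v ∨
      (middleGraph G).Adj w (Sum.inl u) ∨ (middleGraph G).Adj w (Sum.inl v) := by
  rcases w with x | f
  · simpa [middleGraph] using hw
  · obtain ⟨x, hxe, hxf⟩ := hw.2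
    rcases Sym2.mem_iff.1 hxe with rfl | rfl
    · exact .inr (.inr (.inl hxf))
    · exact .inr (.inr (.inr hxf))

end MiddleGraph

/-- For an edge `e` of `G`,
`γ*_{rk}(G) − 1 ≤ γ*_{rk}(G − e) ≤ γ*_{rk}(G) + k`. -/
theorem stmt4 {V : Type*} [Fintype V] (G : SimpleGraph V) (k : ℕ) (e : Sym2 V)
    (he : e ∈ G.edgeSet) :
    mrdn G k - 1 ≤ mrdn (G.deleteEdges {e}) k ∧
    mrdn (G.deleteEdges {e}) k ≤ mrdn G k + k := by
  classical
  induction e using Sym2.ind with | _ u v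
  let φ := middleGraphEmbeddingOfLE (G.deleteEdges_le {s(u, v)})
  have hrange := range_middleGraphEmbeddingOfLE_deleteEdges he
  have hlower := rdn_le_add_one_of_range_eq_compl_singleton φ.toHom φ.injective hrange (k := k)
  have hupper := rdn_le_add_of_range_eq_compl_singleton φ hrange (Sum.inl u) (Sum.inl v)
    (middleGraph_adj_inr_mk_imp he) (k := k)
  unfold mrdn
  constructor
  · convert Nat.sub_le_of_le_add hlower
  · convert hupper
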